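/- In the binary-tree model M_k (defined below), any two distinct worlds σ, τ at the same depth n are (k−n)-bisimilar but not (k−n+1)-bisimilar. -/

import Mathlib

/-- A finite pointed Kripke model with modality indices `I` and atoms `P`. -/
structure PModel (I P : Type) where
  W : Type
  fin : Finite W
  R : I → W → W → Prop
  V : P → W → Prop
  d : W

variable {I P : Type}

/-- `h`-bisimilarity between worlds of two models (back-and-forth to depth `h`). -/
def Bisim (M N : PModel I P) : ℕ → M.W → N.W → Prop
  | 0, w, v => ∀ p, M.V p w ↔ N.V p v
  | h+1, w, v => (∀ p, M.V p w ↔ N.V p v)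
      ∧ (∀ i w', M.R i w w' → ∃ v', N.R i v v' ∧ Bisim M N h w' v')
      ∧ (∀ i v', N.R i v v' → ∃ w', M.R i w w' ∧ Bisim M N h w' v')

/-- `k`-bisimilarity of pointed models. -/
def PBisim (k : ℕ) (M N : PModel I P) : Prop := Bisim M N k M.d N.d

/-- Directed paths of length `n`. -/
def Steps (M : PModel I P) : ℕ → M.W → M.W → Prop
  | 0, w, v => w = v
  | n+1, w, v => ∃ u i, M.R i w u ∧ Steps M n u v

/-- Depth of a world: length of a shortest path from the designated world (`⊤` if none). -/
noncomputable def depth (M : PModel I P) (w : M.W) : ℕ∞ :=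
  sInf {n : ℕ∞ | ∃ m : ℕ, n = (m : ℕ∞) ∧ Steps M m M.d w}

/-- Bound `b(w) = k − d(w)`, with `⊥` for unreachable worlds. -/
noncomputable def bound (k : ℕ) (M : PModel I P) (w : M.W) : WithBot ℤ :=
  ENat.recTopCoe (⊥ : WithBot ℤ) (fun n : ℕ => (((k : ℤ) - n : ℤ) : WithBot ℤ)) (depth M w)

/-- The bound as a natural number (meaningful when `0 ≤ bound k M w`). -/
noncomputable def nbound (k : ℕ) (M : PModel I P) (w : M.W) : ℕ :=
  k - (depth M w).toNat


/-- The binary-tree model `M_k`: worlds are the strings over `{l, r}` (encoded by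
`Bool`: `false` = `l`, `true` = `r`) of length at most `k`; the designated world is
the empty string; `p_n` holds exactly at the worlds of length `n`; modality `true`
(= `s`) gives the solid tree edges `σ → σα`, and modality `false` (= `d`) gives the
dashed edges from each leaf `α_1⋯α_k` to `l^n` whenever `α_{n+1} = l`. -/
noncomputable def Mk (k : ℕ) : PModel Bool (Fin (k+1)) where
  W := {σ : List Bool // σ.length ≤ k}
  fin := (List.finite_length_le Bool k).to_subtype
  R := fun m σ τ =>
    if m then ∃ a : Bool, τ.1 = σ.1 ++ [a]
    else σ.1.length = k ∧
      ∃ n : ℕ, τ.1 = List.replicate n false ∧ σ.1[n]? = some false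
  V := fun p σ => σ.1.length = (p : ℕ)
  d := ⟨[], by simp⟩

/-
Worlds of equal length `n` can copy each other's tree moves while both stay strictly above
the leaves, and no dashed edge leaves a non-leaf world, so they are `(k−n)`-bisimilar. If
`σ` and `τ` disagree at position `j`, say `σ_j = l` and `τ_j = r`, then extending both by
`k − n` tree steps reaches leaves that still disagree at `j`; one more round separates them:
the leaf extending `σ` has a dashed edge to `l^j`, whereas the only dashed successor of depth
`j` a leaf can have is `l^j`, which the leaf extending `τ` reaches only if `τ_j = l`.
-/

theorem Bisim.symm {M N : PModel I P} :
    ∀ {h : ℕ} {w : M.W} {v : N.W}, Bisim M N h w v → Bisim N M h v w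
  | 0, _, _, hb => fun p => (hb p).symm
  | _ + 1, _, _, ⟨hV, hforth, hback⟩ =>
    ⟨fun p => (hV p).symm,
      fun i v' hv => let ⟨w', hw, hb⟩ := hback i v' hv; ⟨w', hw, hb.symm⟩,
      fun i w' hw => let ⟨v', hv, hb⟩ := hforth i w' hw; ⟨v', hv, hb.symm⟩⟩

theorem List.exists_getElem?_false_true_of_ne {l₁ l₂ : List Bool}
    (hlen : l₁.length = l₂.length) (hne : l₁ ≠ l₂) :
    ∃ j : ℕ, (l₁[j]? = some false ∧ l₂[j]? = some true) ∨
      (l₁[j]? = some true ∧ l₂[j]? = some false) := by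
  by_contra! hsame
  refine hne (List.ext_getElem hlen fun j h₁ h₂ => ?_)
  have := hsame j
  rw [List.getElem?_eq_getElem h₁, List.getElem?_eq_getElem h₂] at this
  revert this
  cases l₁[j] <;> cases l₂[j] <;> simp

namespace Mk

variable {k : ℕ}

@[simp]
theorem V_iff {p : Fin (k + 1)} {σ : (Mk k).W} : (Mk k).V p σ ↔ σ.1.length = p := by
  simp [Mk]

theorem R_true_iff {σ τ : (Mk k).W} : (Mk k).R true σ τ ↔ ∃ a, τ.1 = σ.1 ++ [a] := Iff.rfl

theorem R_false_iff {σ τ : (Mk k).W} :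
    (Mk k).R false σ τ ↔
      σ.1.length = k ∧ ∃ n, τ.1 = List.replicate n false ∧ σ.1[n]? = some false := by
  simp [Mk]

theorem length_of_R {i : Bool} {σ σ' : (Mk k).W} (hσ : σ.1.length < k)
    (hR : (Mk k).R i σ σ') : σ'.1.length = σ.1.length + 1 := by
  cases i with
  | false => exact absurd (R_false_iff.mp hR).1 hσ.ne
  | true =>
    obtain ⟨a, ha⟩ := R_true_iff.mp hR
    simp [ha]

theorem exists_R_length_eq {i : Bool} {σ τ σ' : (Mk k).W} (hlen : σ.1.length = τ.1.length)
    (hσ : σ.1.length < k) (hR : (Mk k).R i σ σ') :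
    ∃ τ', (Mk k).R i τ τ' ∧ σ'.1.length = τ'.1.length := by
  cases i with
  | false => exact absurd (R_false_iff.mp hR).1 hσ.ne
  | true =>
    obtain ⟨a, ha⟩ := R_true_iff.mp hR
    exact ⟨⟨τ.1 ++ [a], by simp; omega⟩, ⟨a, rfl⟩, by simp [ha, hlen]⟩

theorem bisim_of_length_eq :
    ∀ {h : ℕ} {σ τ : (Mk k).W}, σ.1.length = τ.1.length → σ.1.length + h ≤ k →
      Bisim (Mk k) (Mk k) h σ τ
  | 0, _, _, hlen, _ => fun _ => by simp [hlen]
  | _ + 1, _, _, hlen, hle => by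
    refine ⟨fun _ => by simp [hlen], fun i σ' hσ' => ?_, fun i τ' hτ' => ?_⟩
    · obtain ⟨τ', hτ', hlen'⟩ := exists_R_length_eq hlen (by omega) hσ'
      have := length_of_R (by omega) hσ'
      exact ⟨τ', hτ', bisim_of_length_eq hlen' (by omega)⟩
    · obtain ⟨σ', hσ', hlen'⟩ := exists_R_length_eq hlen.symm (by omega) hτ'
      have := length_of_R (by omega) hτ'
      exact ⟨σ', hσ', bisim_of_length_eq hlen'.symm (by omega)⟩

theorem not_bisim_of_getElem? :
    ∀ {m : ℕ} {σ τ : (Mk k).W} {j : ℕ}, σ.1.length + m = k → σ.1[j]? = some false →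
      τ.1[j]? = some true → ¬ Bisim (Mk k) (Mk k) (m + 1) σ τ
  | 0, σ, τ, j, hk, hσj, hτj, ⟨_, hforth, _⟩ => by
    have hj : j < σ.1.length := (List.getElem?_eq_some_iff.mp hσj).1
    obtain ⟨τ', hτ', hb⟩ := hforth false ⟨List.replicate j false, by simp; omega⟩
      (R_false_iff.mpr ⟨by omega, j, rfl, hσj⟩)
    obtain ⟨-, n, hτ'n, hτn⟩ := R_false_iff.mp hτ'
    have : n = j := by
      simpa [hτ'n] using V_iff.mp ((hb ⟨j, by omega⟩).mp (List.length_replicate ..))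
    simp [this, hτj] at hτn
  | m + 1, σ, τ, j, hk, hσj, hτj, ⟨_, hforth, _⟩ => by
    have hjσ : j < σ.1.length := (List.getElem?_eq_some_iff.mp hσj).1
    have hjτ : j < τ.1.length := (List.getElem?_eq_some_iff.mp hτj).1
    obtain ⟨τ', hτ', hb⟩ := hforth true ⟨σ.1 ++ [false], by simp; omega⟩ ⟨false, rfl⟩
    obtain ⟨a, ha⟩ := R_true_iff.mp hτ'
    have hk' : (σ.1 ++ [false]).length + m = k := by simp; omega
    have hσ'j : (σ.1 ++ [false])[j]? = some false := by
      rw [List.getElem?_append_left hjσ]; exact hσj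
    have hτ'j : τ'.1[j]? = some true := by
      rw [ha, List.getElem?_append_left hjτ]; exact hτj
    exact not_bisim_of_getElem? hk' hσ'j hτ'j hb

end Mk

/-- Two distinct worlds of `M_k` at the same depth `n` are `(k−n)`-bisimilar but not
`(k−n+1)`-bisimilar. -/
theorem Mk_same_depth_bisim (k n : ℕ) (σ τ : (Mk k).W) (hne : σ ≠ τ)
    (hσ : σ.1.length = n) (hτ : τ.1.length = n) :
    Bisim (Mk k) (Mk k) (k - n) σ τ ∧ ¬ Bisim (Mk k) (Mk k) (k - n + 1) σ τ := by
  have hlen : σ.1.length = τ.1.length := hσ.trans hτ.symm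
  have hσk : σ.1.length + (k - n) = k := by have := σ.2; omega
  have hτk : τ.1.length + (k - n) = k := hlen ▸ hσk
  refine ⟨Mk.bisim_of_length_eq hlen hσk.le, ?_⟩
  obtain ⟨j, ⟨hσj, hτj⟩ | ⟨hσj, hτj⟩⟩ :=
    List.exists_getElem?_false_true_of_ne hlen (Subtype.coe_ne_coe.mpr hne)
  · exact Mk.not_bisim_of_getElem? hσk hσj hτj
  · exact fun hb => Mk.not_bisim_of_getElem? hτk hτj hσj hb.symm
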